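/- Let 𝒜 be a prime unital ∗-algebra over ℂ containing a nontrivial projection P₁, let P₂ = I − P₁, and let Φ : 𝒜 → 𝒜 be a nonlinear ⋄-derivation such that Φ(I/2) and Φ(iI/2) are self-adjoint. Then for every A₁₂ ∈ 𝒜₁₂, A₂₁ ∈ 𝒜₂₁ and A₂₂ ∈ 𝒜₂₂ one has Φ(A₁₂ + A₂₁ + A₂₂) = Φ(A₁₂) + Φ(A₂₁) + Φ(A₂₂). -/

import Mathlib

/-!
The additivity defect `T = Φ (∑ Bᵢ) - ∑ Φ Bᵢ` of a `⋄`-derivation is compatible with `⋄`: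
`C ⋄ T` is the defect of the family `C ⋄ Bᵢ`, and `C ⋄ T = (i C) ⋄ T = 0` forces `C* T = 0`.
For `A₁₂ + A₂₁ + A₂₂`, testing against `P₁` gives `P₁ T = 0`. Testing against `P₂ x P₁`, which
sends the three summands to `0`, a skew element of `𝒜₁₁` and a skew element with zero
`𝒜₁₁`-corner, gives `T* P₂ x P₁ = 0`, hence `P₂ T = 0` by primeness, provided `Φ` is additive
on such pairs. That case is proved the same way with the roles of `P₁` and `P₂` exchanged; there
the defect is itself skew, because `Φ S + Φ(S)* = 2 (Φ(I/2) S + S Φ(I/2))` for skew `S`.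
-/

section Diamond

variable {𝒜 : Type*} [Ring 𝒜] [StarRing 𝒜]

def diamond (A B : 𝒜) : 𝒜 := star A * B - star B * A

infixl:70 " ⋄ " => diamond

theorem star_diamond (A B : 𝒜) : star (A ⋄ B) = -(A ⋄ B) := by
  simp only [diamond, star_sub, star_mul, star_star, neg_sub]

theorem diamond_sub (A B C : 𝒜) : A ⋄ (B - C) = A ⋄ B - A ⋄ C := by
  simp only [diamond, star_sub, mul_sub, sub_mul]
  abel

theorem diamond_sum {ι : Type*} (A : 𝒜) (s : Finset ι) (B : ι → 𝒜) :
    A ⋄ ∑ i ∈ s, B i = ∑ i ∈ s, A ⋄ B i := by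
  simp only [diamond, star_sum, Finset.mul_sum, Finset.sum_mul, Finset.sum_sub_distrib]

theorem diamond_eq_zero_of_star_mul_eq_zero {C B : 𝒜} (h : star C * B = 0) : C ⋄ B = 0 := by
  rw [diamond, h, ← star_star C, ← star_mul, h, star_zero, sub_zero]

def IsDiamondDerivation (Φ : 𝒜 → 𝒜) : Prop :=
  ∀ A B, Φ (A ⋄ B) = Φ A ⋄ B + A ⋄ Φ B

namespace IsDiamondDerivation

variable {Φ : 𝒜 → 𝒜}

theorem map_zero (hΦ : IsDiamondDerivation Φ) : Φ 0 = 0 := by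
  simpa [diamond] using hΦ 0 0

theorem diamond_map_sum_sub (hΦ : IsDiamondDerivation Φ) {ι : Type*} (C : 𝒜) (s : Finset ι)
    (B : ι → 𝒜) :
    C ⋄ (Φ (∑ i ∈ s, B i) - ∑ i ∈ s, Φ (B i)) = Φ (∑ i ∈ s, C ⋄ B i) - ∑ i ∈ s, Φ (C ⋄ B i) := by
  have h (X : 𝒜) : C ⋄ Φ X = Φ (C ⋄ X) - Φ C ⋄ X := by rw [hΦ]; abel
  simp only [diamond_sub, diamond_sum, h, Finset.sum_sub_distrib]
  abel

theorem diamond_map_add_sub (hΦ : IsDiamondDerivation Φ) (C B₁ B₂ : 𝒜) :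
    C ⋄ (Φ (B₁ + B₂) - Φ B₁ - Φ B₂) = Φ (C ⋄ B₁ + C ⋄ B₂) - Φ (C ⋄ B₁) - Φ (C ⋄ B₂) := by
  simpa [Fin.sum_univ_two, sub_sub] using hΦ.diamond_map_sum_sub C Finset.univ ![B₁, B₂]

end IsDiamondDerivation

section Complex

variable [Algebra ℂ 𝒜] [StarModule ℂ 𝒜]

theorem star_mul_eq_zero_of_diamond {C B : 𝒜} (h₁ : C ⋄ B = 0)
    (h₂ : (Complex.I • C) ⋄ B = 0) : star C * B = 0 := by
  have h₂' : (-Complex.I) • (star C * B + star B * C) = 0 := by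
    rw [← h₂, diamond, star_smul, Complex.star_def, Complex.conj_I, smul_mul_assoc,
      mul_smul_comm]
    module
  have hsum := (smul_eq_zero.mp h₂').resolve_left (neg_ne_zero.mpr Complex.I_ne_zero)
  have h2 : (2 : ℂ) • (star C * B) = 0 := by
    rw [diamond] at h₁
    linear_combination (norm := module) h₁ + hsum
  exact (smul_eq_zero.mp h2).resolve_left two_ne_zero

theorem eq_zero_of_mul_eq_zero_of_diamond_eq_zero
    (hprime : ∀ a b : 𝒜, (∀ x : 𝒜, a * x * b = 0) → a = 0 ∨ b = 0)
    {E : 𝒜} (hE : IsStarProjection E) (hE₀ : E ≠ 0) {T : 𝒜} (hET : E * T = 0)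
    (hT : ∀ x, ((1 - E) * x * E) ⋄ T = 0) : T = 0 := by
  have hF := hE.one_sub
  have hTF : star T * (1 - E) = 0 := by
    refine (hprime _ E fun x => ?_).resolve_right hE₀
    have hI : (Complex.I • ((1 - E) * x * E)) ⋄ T = 0 := by
      rw [← smul_mul_assoc, ← mul_smul_comm]
      exact hT _
    simpa [mul_assoc] using congrArg star (star_mul_eq_zero_of_diamond (hT x) hI)
  have hFT : (1 - E) * T = 0 := by
    simpa [hF.isSelfAdjoint.star_eq] using congrArg star hTF
  calc T = E * T + (1 - E) * T := by rw [← add_mul, add_sub_cancel, one_mul]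
    _ = 0 := by rw [hET, hFT, add_zero]

namespace IsDiamondDerivation

variable {Φ : 𝒜 → 𝒜}

theorem star_mul_map_sum_sub_eq_zero (hΦ : IsDiamondDerivation Φ) {ι : Type*} {s : Finset ι}
    {B : ι → 𝒜} {C : 𝒜} {j : ι} (hj : j ∈ s) (h : ∀ i ∈ s, i ≠ j → star C * B i = 0) :
    star C * (Φ (∑ i ∈ s, B i) - ∑ i ∈ s, Φ (B i)) = 0 := by
  have key (C' : 𝒜) (hC' : ∀ i ∈ s, i ≠ j → star C' * B i = 0) :
      C' ⋄ (Φ (∑ i ∈ s, B i) - ∑ i ∈ s, Φ (B i)) = 0 := by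
    have hB i (hi : i ∈ s) (hij : i ≠ j) := diamond_eq_zero_of_star_mul_eq_zero (hC' i hi hij)
    rw [hΦ.diamond_map_sum_sub, Finset.sum_eq_single_of_mem j hj hB,
      Finset.sum_eq_single_of_mem j hj fun i hi hij => by rw [hB i hi hij, hΦ.map_zero], sub_self]
  refine star_mul_eq_zero_of_diamond (key C h) (key _ fun i hi hij => ?_)
  rw [star_smul, smul_mul_assoc, h i hi hij, smul_zero]

theorem star_mul_map_add_sub_eq_zero (hΦ : IsDiamondDerivation Φ) {C B₁ : 𝒜}
    (h : star C * B₁ = 0) (B₂ : 𝒜) : star C * (Φ (B₁ + B₂) - Φ B₁ - Φ B₂) = 0 := by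
  simpa [Fin.sum_univ_two, sub_sub] using
    hΦ.star_mul_map_sum_sub_eq_zero (s := .univ) (B := ![B₁, B₂]) (j := 1) (Finset.mem_univ _)
      (by simp [Fin.forall_fin_two, h])

theorem map_add_star_map (hΦ : IsDiamondDerivation Φ)
    (hW : IsSelfAdjoint (Φ ((1 / 2 : ℂ) • 1))) {S : 𝒜} (hS : star S = -S) :
    Φ S + star (Φ S) = (2 : ℂ) • (Φ ((1 / 2 : ℂ) • 1) * S + S * Φ ((1 / 2 : ℂ) • 1)) := by
  have h := hΦ ((1 / 2 : ℂ) • 1) S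
  have hhalf : ((1 / 2 : ℂ) • (1 : 𝒜)) ⋄ S = S := by
    rw [diamond, star_smul, star_one, hS]
    simp only [star_div₀, star_one, star_ofNat, smul_mul_assoc, one_mul, mul_smul_comm, mul_one]
    module
  rw [hhalf, diamond, diamond, hW.star_eq, star_smul, star_one, hS] at h
  simp only [star_div₀, star_one, star_ofNat, smul_mul_assoc, one_mul, mul_smul_comm,
    mul_one, neg_mul] at h
  linear_combination (norm := module) (2 : ℂ) • h

theorem star_map_add_sub (hΦ : IsDiamondDerivation Φ)
    (hW : IsSelfAdjoint (Φ ((1 / 2 : ℂ) • 1))) {S₁ S₂ : 𝒜} (hS₁ : star S₁ = -S₁)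
    (hS₂ : star S₂ = -S₂) :
    star (Φ (S₁ + S₂) - Φ S₁ - Φ S₂) = -(Φ (S₁ + S₂) - Φ S₁ - Φ S₂) := by
  have hS : star (S₁ + S₂) = -(S₁ + S₂) := by rw [star_add, hS₁, hS₂, neg_add]
  have h₁ := hΦ.map_add_star_map hW hS₁
  have h₂ := hΦ.map_add_star_map hW hS₂
  have h := hΦ.map_add_star_map hW hS
  rw [star_sub, star_sub]
  linear_combination (norm := skip) h - h₁ - h₂
  simp only [mul_add, add_mul]
  module

theorem map_add_of_isStarProjection (hΦ : IsDiamondDerivation Φ)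
    (hW : IsSelfAdjoint (Φ ((1 / 2 : ℂ) • 1)))
    (hprime : ∀ a b : 𝒜, (∀ x : 𝒜, a * x * b = 0) → a = 0 ∨ b = 0)
    {E : 𝒜} (hE : IsStarProjection E) (hE₁ : E ≠ 1) {U R : 𝒜}
    (hU : star U = -U) (hEU : (1 - E) * U = 0) (hR : star R = -R) (hER : E * R * E = 0) :
    Φ (U + R) = Φ U + Φ R := by
  have hF := hE.one_sub
  set F := 1 - E with hF_def
  rw [← sub_eq_zero, ← sub_sub]
  set D := Φ (U + R) - Φ U - Φ R
  have hD : star D = -D := hΦ.star_map_add_sub hW hU hR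
  have hFD : F * D = 0 := by
    simpa [hF.isSelfAdjoint.star_eq] using
      hΦ.star_mul_map_add_sub_eq_zero (C := F) (by rwa [hF.isSelfAdjoint.star_eq]) R
  have hDF : D * F = 0 := by
    simpa [hD, hF.isSelfAdjoint.star_eq] using congrArg star hFD
  have hED : E * D = D := by
    rwa [hF_def, sub_mul, one_mul, sub_eq_zero, eq_comm] at hFD
  have hDE : D * E = D := by
    rwa [hF_def, mul_sub, mul_one, sub_eq_zero, eq_comm] at hDF
  have hEF : E * F = 0 := hE.mul_one_sub_self
  refine (hprime D F fun x => ?_).resolve_right (sub_ne_zero.mpr hE₁.symm)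
  have hV : star E * ((E * x * F) ⋄ R) = 0 := by
    simp only [diamond, star_mul, hE.isSelfAdjoint.star_eq, hF.isSelfAdjoint.star_eq, hR, mul_sub,
      mul_neg, neg_mul, ← mul_assoc, hEF, hER, zero_mul, neg_zero, sub_zero]
  have hCD : E * ((E * x * F) ⋄ D) = 0 := by
    have h := hΦ.star_mul_map_add_sub_eq_zero hV ((E * x * F) ⋄ U)
    rwa [hE.isSelfAdjoint.star_eq, add_comm, sub_right_comm, ← hΦ.diamond_map_add_sub] at h
  calc D * x * F = E * ((E * x * F) ⋄ D) * F := by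
        simp only [diamond, star_mul, hE.isSelfAdjoint.star_eq, hF.isSelfAdjoint.star_eq, hD,
          mul_sub, mul_neg, neg_mul, ← mul_assoc, hEF, hED, hDE, zero_mul, zero_sub,
          neg_neg, hF.isIdempotentElem.mul_mul_self]
    _ = 0 := by rw [hCD, zero_mul]

theorem map_add_add_of_isStarProjection (hΦ : IsDiamondDerivation Φ)
    (hW : IsSelfAdjoint (Φ ((1 / 2 : ℂ) • 1)))
    (hprime : ∀ a b : 𝒜, (∀ x : 𝒜, a * x * b = 0) → a = 0 ∨ b = 0)
    {E : 𝒜} (hE : IsStarProjection E) (hE₀ : E ≠ 0) (hE₁ : E ≠ 1) (a b c : 𝒜) :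
    Φ (E * a * (1 - E) + (1 - E) * b * E + (1 - E) * c * (1 - E)) =
      Φ (E * a * (1 - E)) + Φ ((1 - E) * b * E) + Φ ((1 - E) * c * (1 - E)) := by
  have hF := hE.one_sub
  set F := 1 - E with hF_def
  have hEF : E * F = 0 := hE.mul_one_sub_self
  have hFE : F * E = 0 := hE.one_sub_mul_self
  have hEF' (y : 𝒜) : y * E * F = 0 := by rw [mul_assoc, hEF, mul_zero]
  have hFE' (y : 𝒜) : y * F * E = 0 := by rw [mul_assoc, hFE, mul_zero]
  set B : Fin 3 → 𝒜 := ![E * a * F, F * b * E, F * c * F]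
  suffices Φ (∑ i, B i) - ∑ i, Φ (B i) = 0 by
    simpa [B, Fin.sum_univ_three, sub_eq_zero] using this
  refine eq_zero_of_mul_eq_zero_of_diamond_eq_zero hprime hE hE₀ ?_ fun x => ?_
  · simpa [hE.isSelfAdjoint.star_eq] using
      hΦ.star_mul_map_sum_sub_eq_zero (C := E) (B := B) (Finset.mem_univ 0)
        (by simp [Fin.forall_fin_succ, B, hE.isSelfAdjoint.star_eq, ← mul_assoc, hEF])
  rw [← hF_def]
  have hCB₀ : (F * x * E) ⋄ B 0 = 0 := diamond_eq_zero_of_star_mul_eq_zero <| by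
    simp [B, hE.isSelfAdjoint.star_eq, hF.isSelfAdjoint.star_eq, ← mul_assoc, hFE']
  rw [hΦ.diamond_map_sum_sub, Fin.sum_univ_three, Fin.sum_univ_three, hCB₀, zero_add,
    hΦ.map_zero, zero_add, sub_eq_zero]
  refine hΦ.map_add_of_isStarProjection hW hprime hE hE₁ (star_diamond _ _) ?_
    (star_diamond _ _) ?_
  · simp [← hF_def, B, diamond, hE.isSelfAdjoint.star_eq, hF.isSelfAdjoint.star_eq, mul_sub,
      ← mul_assoc, hFE]
  · simp [B, diamond, hE.isSelfAdjoint.star_eq, hF.isSelfAdjoint.star_eq, mul_sub, ← mul_assoc,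
      hEF, hFE']

end IsDiamondDerivation

end Complex

end Diamond

theorem stmt7_general {𝒜 : Type*} [Ring 𝒜] [Algebra ℂ 𝒜] [StarRing 𝒜] [StarModule ℂ 𝒜]
    (hprime : ∀ a b : 𝒜, (∀ x : 𝒜, a * x * b = 0) → a = 0 ∨ b = 0)
    (P₁ : 𝒜) (hP₁star : star P₁ = P₁) (hP₁idem : P₁ * P₁ = P₁)
    (hP₁ne0 : P₁ ≠ 0) (hP₁ne1 : P₁ ≠ 1)
    (Φ : 𝒜 → 𝒜)
    (hΦ : ∀ A B : 𝒜, Φ (star A * B - star B * A) =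
      (star (Φ A) * B - star B * Φ A) + (star A * Φ B - star (Φ B) * A))
    (h1 : star (Φ (((1 : ℂ)/2) • (1 : 𝒜))) = Φ (((1 : ℂ)/2) • (1 : 𝒜))) :
    ∀ A₁₂ A₂₁ A₂₂ : 𝒜, (∃ x : 𝒜, A₁₂ = P₁ * x * (1 - P₁)) →
      (∃ x : 𝒜, A₂₁ = (1 - P₁) * x * P₁) →
      (∃ x : 𝒜, A₂₂ = (1 - P₁) * x * (1 - P₁)) →
      Φ (A₁₂ + A₂₁ + A₂₂) = Φ A₁₂ + Φ A₂₁ + Φ A₂₂ := by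
  rintro _ _ _ ⟨a, rfl⟩ ⟨b, rfl⟩ ⟨c, rfl⟩
  exact IsDiamondDerivation.map_add_add_of_isStarProjection hΦ h1 hprime ⟨hP₁idem, hP₁star⟩
    hP₁ne0 hP₁ne1 a b c

/-- In a prime unital ∗-algebra over `ℂ` with nontrivial projection `P₁`
and `P₂ = I − P₁`, a nonlinear `⋄`-derivation `Φ` with `Φ(I/2)`, `Φ(iI/2)` self-adjoint
satisfies `Φ(A₁₂ + A₂₁ + A₂₂) = Φ(A₁₂) + Φ(A₂₁) + Φ(A₂₂)`. -/
theorem stmt7 {𝒜 : Type*} [Ring 𝒜] [Algebra ℂ 𝒜] [StarRing 𝒜] [StarModule ℂ 𝒜]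
    (hprime : ∀ a b : 𝒜, (∀ x : 𝒜, a * x * b = 0) → a = 0 ∨ b = 0)
    (P₁ : 𝒜) (hP₁star : star P₁ = P₁) (hP₁idem : P₁ * P₁ = P₁)
    (hP₁ne0 : P₁ ≠ 0) (hP₁ne1 : P₁ ≠ 1)
    (Φ : 𝒜 → 𝒜)
    (hΦ : ∀ A B : 𝒜, Φ (star A * B - star B * A) =
      (star (Φ A) * B - star B * Φ A) + (star A * Φ B - star (Φ B) * A))
    (h1 : star (Φ (((1 : ℂ)/2) • (1 : 𝒜))) = Φ (((1 : ℂ)/2) • (1 : 𝒜)))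
    (h2 : star (Φ ((Complex.I/2) • (1 : 𝒜))) = Φ ((Complex.I/2) • (1 : 𝒜))) :
    ∀ A₁₂ A₂₁ A₂₂ : 𝒜, (∃ x : 𝒜, A₁₂ = P₁ * x * (1 - P₁)) →
      (∃ x : 𝒜, A₂₁ = (1 - P₁) * x * P₁) →
      (∃ x : 𝒜, A₂₂ = (1 - P₁) * x * (1 - P₁)) →
      Φ (A₁₂ + A₂₁ + A₂₂) = Φ A₁₂ + Φ A₂₁ + Φ A₂₂ :=
  stmt7_general hprime P₁ hP₁star hP₁idem hP₁ne0 hP₁ne1 Φ hΦ h1
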